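/- Let d ≥ 1, N ≥ 1, fix i ∈ {1,…,d}, let R(x) = x_i/|x|^{d+1} on ℝ^d∖{0}, and for x ≠ 0 let P_N(x,y) be the Taylor polynomial of degree N−1 in y, centered at y = 0, of y ↦ R(x−y). Let f ∈ L_N(ℝ^d) with constants C > 0, 0 ≤ ε < 1, and let 0 < δ < 1−ε. Then the integral ∫_{ℝ^d} |y|^{N−ε−δ}|f(y)| dy is finite, and there exists a constant C' > 0 (depending only on d, N and δ) such that for every x ≠ 0, ∫_{{y : |y| < |x|/2}} |f(y)|·|R(x−y) − P_N(x,y)| dy ≤ C'·|x|^{−d−N+ε+δ}·∫_{ℝ^d} |y|^{N−ε−δ}|f(y)| dy. -/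

import Mathlib

open MeasureTheory Filter Topology Real

noncomputable section

abbrev Ed (d : ℕ) := EuclideanSpace ℝ (Fin d)

/-- The class `L_N(ℝ^d)` with constants `C` and `ε`. -/
structure IsLN (d N : ℕ) (f : Ed d → ℝ) (C ε : ℝ) : Prop where
  smooth : ContDiff ℝ 1 f
  Cpos : 0 < C
  eps_nonneg : 0 ≤ ε
  eps_lt_one : ε < 1
  decay : ∀ x : Ed d, |f x| ≤ C * (1 + ‖x‖) ^ (-(d:ℝ) - N + ε)
  deriv_decay : ∀ (x : Ed d) (j : Fin d),
      |fderiv ℝ f x (EuclideanSpace.single j 1)| ≤ C * (1 + ‖x‖) ^ (-(d:ℝ) - N - 1 + ε)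
  moments : ∀ β : Fin d → ℕ, (∑ j, β j) < N →
      ∫ x : Ed d, (∏ j, (x j) ^ (β j)) * f x = 0

/-- The Riesz kernel `R(x) = x_i / ‖x‖^(d+1)`. -/
noncomputable def rieszKernel (d : ℕ) (i : Fin d) (x : Ed d) : ℝ := x i / ‖x‖ ^ (d + 1)

/-- `P_N(x,y)`: the Taylor polynomial of degree `N-1` in `y`, centered at `y = 0`, of the
function `y ↦ R(x - y)`. -/
noncomputable def taylorP (d N : ℕ) (i : Fin d) (x y : Ed d) : ℝ :=
  ∑ k ∈ Finset.range N,
    ((k.factorial : ℝ))⁻¹ * iteratedFDeriv ℝ k (fun z => rieszKernel d i (x - z)) 0 (fun _ => y)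

/-! The remainder `R(x - y) - P_N(x,y)` is controlled by Taylor's formula with integral
remainder along the segment from `x` to `x - y`, which stays at distance `≥ ‖x‖/2` from the
origin when `‖y‖ < ‖x‖/2`. Since `R` is homogeneous of degree `-d`, its `N`-th derivative is
homogeneous of degree `-d-N`, hence bounded by `M ‖z‖^{-d-N}` with `M` its maximum on the unit
sphere. This gives `|R(x-y) - P_N(x,y)| ≤ A ‖y‖^N ‖x‖^{-d-N}`, and on `‖y‖ < ‖x‖/2` one trades
`‖y‖^{ε+δ} ≤ ‖x‖^{ε+δ}`. The decay of `f` makes `‖y‖^{N-ε-δ} |f y|` integrable. -/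

section Calculus

variable {E F : Type*} [NormedAddCommGroup E] [NormedSpace ℝ E]
  [NormedAddCommGroup F] [NormedSpace ℝ F]

theorem iteratedFDeriv_smul_of_homogeneous {f : E → F} {k : ℕ}
    (hhom : ∀ c : ℝ, 0 < c → ∀ x, f (c • x) = (c ^ k)⁻¹ • f x) (n : ℕ) {c : ℝ} (hc : 0 < c)
    (u : E) :
    iteratedFDeriv ℝ n f (c • u) = (c ^ (k + n))⁻¹ • iteratedFDeriv ℝ n f u := by
  let S : E ≃L[ℝ] E := ContinuousLinearEquiv.smulLeft (Units.mk0 c hc.ne')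
  let T : F ≃L[ℝ] F := ContinuousLinearEquiv.smulLeft (Units.mk0 (c ^ k)⁻¹ (by positivity))
  have hfun : f ∘ S = T ∘ f := funext fun x => hhom c hc x
  have hright := S.iteratedFDerivWithin_comp_right f uniqueDiffOn_univ (Set.mem_univ (S u)) n
  simp only [Set.preimage_univ, iteratedFDerivWithin_univ, hfun, T.iteratedFDeriv_comp_left]
    at hright
  ext m
  have hm := congrArg (fun L => L m) hright
  simp only [ContinuousMultilinearMap.compContinuousLinearMap_apply,
    ContinuousLinearMap.compContinuousMultilinearMap_coe, Function.comp_apply,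
    ContinuousLinearEquiv.coe_coe, ContinuousLinearEquiv.smulLeft_apply_apply, Units.smul_mk0,
    ContinuousMultilinearMap.map_smul_univ, Finset.prod_const, Finset.card_univ,
    Fintype.card_fin, S, T] at hm
  rw [smul_apply, pow_add, mul_inv_rev, mul_smul, hm, smul_smul,
    inv_mul_cancel₀ (pow_ne_zero n hc.ne'), one_smul]

theorem exists_norm_iteratedFDeriv_le_of_homogeneous [FiniteDimensional ℝ E] {f : E → F}
    {k n : ℕ} (hf : ContDiffOn ℝ n f {0}ᶜ)
    (hhom : ∀ c : ℝ, 0 < c → ∀ x, f (c • x) = (c ^ k)⁻¹ • f x) :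
    ∃ M, 0 < M ∧ ∀ z ≠ 0, ‖iteratedFDeriv ℝ n f z‖ ≤ M / ‖z‖ ^ (k + n) := by
  have hcont : ContinuousOn (iteratedFDeriv ℝ n f) {0}ᶜ :=
    ContinuousOn.continuousOn_iteratedFDeriv hf isOpen_compl_singleton le_rfl
  obtain ⟨B, hB⟩ := (isCompact_sphere (0 : E) 1).exists_bound_of_continuousOn
    (hcont.mono fun z hz => by simp_all [ne_of_apply_ne norm])
  refine ⟨max B 1, by positivity, fun z hz => ?_⟩
  have hz' : 0 < ‖z‖ := norm_pos_iff.2 hz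
  have hu : ‖z‖⁻¹ • z ∈ Metric.sphere (0 : E) 1 := by simp [norm_smul, hz'.ne']
  rw [← smul_inv_smul₀ hz'.ne' z, iteratedFDeriv_smul_of_homogeneous hhom n hz', norm_smul,
    smul_inv_smul₀ hz'.ne', norm_inv, norm_pow, norm_norm, div_eq_inv_mul]
  gcongr
  exact (hB _ hu).trans (le_max_left _ _)

theorem norm_iteratedFDeriv_comp_const_sub (f : E → F) (x w : E) (n : ℕ) :
    ‖iteratedFDeriv ℝ n (fun z => f (x - z)) w‖ = ‖iteratedFDeriv ℝ n f (x - w)‖ := by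
  have hfun : (fun z => f (x - z)) = fun z => (f ∘ LinearIsometryEquiv.neg ℝ) (z - x) := by
    funext z; simp
  rw [hfun, iteratedFDeriv_comp_sub, LinearIsometryEquiv.norm_iteratedFDeriv_comp_right]
  simp

theorem norm_map_add_sub_sum_iteratedFDeriv_le [CompleteSpace F] {f : E → F} {x y : E} {n : ℕ}
    {K : ℝ} (hf : ∀ t ∈ Set.Icc (0 : ℝ) 1, ContDiffAt ℝ (n + 1) f (x + t • y))
    (hK : ∀ t ∈ Set.Icc (0 : ℝ) 1, ‖iteratedFDeriv ℝ (n + 1) f (x + t • y)‖ ≤ K) :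
    ‖f (x + y) - ∑ k ∈ Finset.range (n + 1),
        (k.factorial : ℝ)⁻¹ • iteratedFDeriv ℝ k f x (fun _ => y)‖ ≤ K * ‖y‖ ^ (n + 1) := by
  have hint : ‖∫ t in (0 : ℝ)..1, (1 - t) ^ n •
      iteratedFDeriv ℝ (n + 1) f (x + t • y) (fun _ => y)‖ ≤ K * ‖y‖ ^ (n + 1) := by
    refine (intervalIntegral.norm_integral_le_of_norm_le_const
      (C := K * ‖y‖ ^ (n + 1)) fun t ht => ?_).trans (by simp)
    rw [Set.uIoc_of_le zero_le_one] at ht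
    have ht' : t ∈ Set.Icc (0 : ℝ) 1 := Set.Ioc_subset_Icc_self ht
    calc ‖(1 - t) ^ n • iteratedFDeriv ℝ (n + 1) f (x + t • y) (fun _ => y)‖
        ≤ 1 * (‖iteratedFDeriv ℝ (n + 1) f (x + t • y)‖ * ∏ _j : Fin (n + 1), ‖y‖) := by
          rw [norm_smul]
          gcongr
          · rw [norm_pow, Real.norm_eq_abs, abs_of_nonneg (by linarith [ht'.2])]
            exact pow_le_one₀ (by linarith [ht'.2]) (by linarith [ht'.1])
          · exact ContinuousMultilinearMap.le_opNorm _ _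
      _ ≤ K * ‖y‖ ^ (n + 1) := by
          rw [one_mul, Finset.prod_const, Finset.card_fin]
          gcongr
          exact hK t ht'
  rw [map_add_eq_sum_add_integral_iteratedFDeriv hf, add_sub_cancel_left, norm_smul]
  calc ‖((n.factorial : ℝ))⁻¹‖ * _ ≤ 1 * (K * ‖y‖ ^ (n + 1)) := by
        gcongr
        rw [norm_inv, RCLike.norm_natCast]
        exact inv_le_one_of_one_le₀ (by exact_mod_cast n.factorial_pos)
    _ = K * ‖y‖ ^ (n + 1) := one_mul _

theorem half_norm_lt_norm_sub_smul {x y : E} (hy : ‖y‖ < ‖x‖ / 2) {t : ℝ}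
    (ht : t ∈ Set.Icc (0 : ℝ) 1) : ‖x‖ / 2 < ‖x - t • y‖ := by
  have hty : ‖t • y‖ ≤ ‖y‖ := by
    rw [norm_smul, Real.norm_eq_abs, abs_of_nonneg ht.1]
    exact mul_le_of_le_one_left (norm_nonneg y) ht.2
  linarith [norm_sub_norm_le x (t • y)]

end Calculus

theorem pow_div_pow_le_rpow_mul_rpow {r ρ s : ℝ} {k m : ℕ} (hr : 0 ≤ r) (hρ : 0 < ρ)
    (hrρ : r ≤ ρ) (hs : 0 ≤ s) (hsm : s ≤ m) :
    r ^ m / ρ ^ (k + m) ≤ ρ ^ (-(k : ℝ) - m + s) * r ^ ((m : ℝ) - s) := by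
  have hsplit : r ^ m = r ^ ((m : ℝ) - s) * r ^ s := by
    rw [← rpow_add_of_nonneg hr (sub_nonneg.2 hsm) hs, sub_add_cancel, rpow_natCast]
  have hexp : ρ ^ (-(k : ℝ) - m + s) = (ρ ^ (k + m))⁻¹ * ρ ^ s := by
    rw [rpow_add hρ, ← rpow_natCast, ← rpow_neg hρ.le]
    push_cast
    ring_nf
  rw [hsplit, hexp, div_eq_inv_mul]
  calc (ρ ^ (k + m))⁻¹ * (r ^ ((m : ℝ) - s) * r ^ s)
      ≤ (ρ ^ (k + m))⁻¹ * (r ^ ((m : ℝ) - s) * ρ ^ s) := by gcongr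
    _ = (ρ ^ (k + m))⁻¹ * ρ ^ s * r ^ ((m : ℝ) - s) := by ring

theorem integrableOn_and_setIntegral_le_const_mul_integral {α : Type*} [MeasurableSpace α]
    {μ : Measure α} {s : Set α} {F G : α → ℝ} {κ : ℝ} (hs : MeasurableSet s)
    (hG : AEStronglyMeasurable G (μ.restrict s)) (hF : Integrable F μ) (hF0 : 0 ≤ F)
    (hκ : 0 ≤ κ) (hGF : ∀ y ∈ s, ‖G y‖ ≤ κ * F y) :
    IntegrableOn G s μ ∧ ∫ y in s, G y ∂μ ≤ κ * ∫ y, F y ∂μ := by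
  have hκF : IntegrableOn (fun y => κ * F y) s μ := (hF.const_mul κ).integrableOn
  have hGint : IntegrableOn G s μ := hκF.mono' hG (ae_restrict_of_forall_mem hs hGF)
  refine ⟨hGint, ?_⟩
  calc ∫ y in s, G y ∂μ ≤ ∫ y in s, κ * F y ∂μ :=
        setIntegral_mono_on hGint hκF hs fun y hy => (le_abs_self _).trans (hGF y hy)
    _ = κ * ∫ y in s, F y ∂μ := integral_const_mul κ _
    _ ≤ κ * ∫ y, F y ∂μ :=
        mul_le_mul_of_nonneg_left (setIntegral_le_integral hF (ae_of_all _ hF0)) hκ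

section Riesz

variable {d : ℕ} (i : Fin d)

theorem rieszKernel_smul {c : ℝ} (hc : 0 < c) (x : Ed d) :
    rieszKernel d i (c • x) = (c ^ d)⁻¹ • rieszKernel d i x := by
  simp only [rieszKernel, PiLp.smul_apply, smul_eq_mul, norm_smul, Real.norm_eq_abs,
    abs_of_pos hc]
  rcases eq_or_ne ‖x‖ 0 with hx | hx
  · simp [hx]
  · field_simp
    ring

theorem contDiffOn_rieszKernel {n : WithTop ℕ∞} : ContDiffOn ℝ n (rieszKernel d i) {0}ᶜ :=
  fun _ hx => ((EuclideanSpace.proj i : Ed d →L[ℝ] ℝ).contDiff.contDiffAt.div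
    ((contDiffAt_norm ℝ hx).pow (d + 1)) (pow_ne_zero _ (norm_ne_zero_iff.2 hx))).contDiffWithinAt

theorem measurable_rieszKernel : Measurable (rieszKernel d i) := by
  unfold rieszKernel
  fun_prop

theorem continuous_taylorP (N : ℕ) (x : Ed d) : Continuous (taylorP d N i x) := by
  unfold taylorP
  fun_prop

theorem exists_abs_rieszKernel_sub_taylorP_le (N : ℕ) (hN : 1 ≤ N) :
    ∃ A, 0 < A ∧ ∀ x y : Ed d, ‖y‖ < ‖x‖ / 2 →
      |rieszKernel d i (x - y) - taylorP d N i x y| ≤ A * (‖y‖ ^ N / ‖x‖ ^ (d + N)) := by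
  obtain ⟨n, rfl⟩ : ∃ n, N = n + 1 := ⟨N - 1, by omega⟩
  obtain ⟨M, hM, hMbound⟩ := exists_norm_iteratedFDeriv_le_of_homogeneous (n := n + 1)
    (contDiffOn_rieszKernel i) fun _ hc => rieszKernel_smul i hc
  refine ⟨M * 2 ^ (d + (n + 1)), by positivity, fun x y hy => ?_⟩
  have hx : 0 < ‖x‖ := by linarith [norm_nonneg y]
  have hseg : ∀ t ∈ Set.Icc (0 : ℝ) 1, ‖x‖ / 2 < ‖x - t • y‖ :=
    fun t ht => half_norm_lt_norm_sub_smul hy ht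
  have hne : ∀ t ∈ Set.Icc (0 : ℝ) 1, x - t • y ≠ 0 :=
    fun t ht => norm_pos_iff.1 (by linarith [hseg t ht])
  have hsmooth : ∀ t ∈ Set.Icc (0 : ℝ) 1,
      ContDiffAt ℝ (n + 1) (fun z => rieszKernel d i (x - z)) (0 + t • y) := fun t ht => by
    rw [zero_add]
    exact ((contDiffOn_rieszKernel i).contDiffAt
      (isOpen_compl_singleton.mem_nhds (hne t ht))).comp _ (contDiffAt_const.sub contDiffAt_id)
  have hderiv : ∀ t ∈ Set.Icc (0 : ℝ) 1,
      ‖iteratedFDeriv ℝ (n + 1) (fun z => rieszKernel d i (x - z)) (0 + t • y)‖ ≤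
        M * 2 ^ (d + (n + 1)) / ‖x‖ ^ (d + (n + 1)) := fun t ht => by
    rw [zero_add, norm_iteratedFDeriv_comp_const_sub]
    calc ‖iteratedFDeriv ℝ (n + 1) (rieszKernel d i) (x - t • y)‖
        ≤ M / ‖x - t • y‖ ^ (d + (n + 1)) := hMbound _ (hne t ht)
      _ ≤ M / (‖x‖ / 2) ^ (d + (n + 1)) := by gcongr; exact (hseg t ht).le
      _ = M * 2 ^ (d + (n + 1)) / ‖x‖ ^ (d + (n + 1)) := by rw [div_pow]; field_simp
  have htaylor := norm_map_add_sub_sum_iteratedFDeriv_le hsmooth hderiv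
  simp only [zero_add, smul_eq_mul] at htaylor
  rw [← Real.norm_eq_abs, taylorP]
  exact htaylor.trans_eq (by ring)

end Riesz

theorem IsLN.integrable_rpow_norm_mul_abs {d N : ℕ} {f : Ed d → ℝ} {C ε : ℝ}
    (hf : IsLN d N f C ε) {a : ℝ} (ha : 0 ≤ a) (haN : a < N - ε) :
    Integrable (fun y : Ed d => ‖y‖ ^ a * |f y|) := by
  have hdom : Integrable (fun y : Ed d => C * (1 + ‖y‖) ^ (-((d : ℝ) + (N - ε - a)))) :=
    (integrable_one_add_norm (by rw [finrank_euclideanSpace_fin]; linarith)).const_mul C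
  refine hdom.mono' ((continuous_norm.rpow_const fun _ => Or.inr ha).mul
    hf.smooth.continuous.abs).aestronglyMeasurable (ae_of_all _ fun y => ?_)
  have hy : 0 < 1 + ‖y‖ := by positivity
  rw [Real.norm_eq_abs, abs_of_nonneg (by positivity)]
  calc ‖y‖ ^ a * |f y| ≤ (1 + ‖y‖) ^ a * (C * (1 + ‖y‖) ^ (-(d : ℝ) - N + ε)) := by
        gcongr
        · linarith
        · exact hf.decay y
    _ = C * (1 + ‖y‖) ^ (-((d : ℝ) + (N - ε - a))) := by
        rw [mul_left_comm, ← rpow_add hy]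
        ring_nf

theorem riesz_region_D1_bound_general (d N : ℕ) (hN : 1 ≤ N) (i : Fin d)
    (δ : ℝ) (hδ : 0 < δ) :
    ∃ C' : ℝ, 0 < C' ∧ ∀ (f : Ed d → ℝ) (C ε : ℝ), IsLN d N f C ε → δ < 1 - ε →
      Integrable (fun y : Ed d => ‖y‖ ^ ((N : ℝ) - ε - δ) * |f y|) ∧
      ∀ x : Ed d, x ≠ 0 →
        IntegrableOn (fun y : Ed d => |f y| * |rieszKernel d i (x - y) - taylorP d N i x y|)
          {y : Ed d | ‖y‖ < ‖x‖ / 2} ∧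
        ∫ y in {y : Ed d | ‖y‖ < ‖x‖ / 2},
            |f y| * |rieszKernel d i (x - y) - taylorP d N i x y| ≤
          C' * ‖x‖ ^ (-(d:ℝ) - N + ε + δ) *
            ∫ y : Ed d, ‖y‖ ^ ((N : ℝ) - ε - δ) * |f y| := by
  obtain ⟨A, hA, hremainder⟩ := exists_abs_rieszKernel_sub_taylorP_le i N hN
  refine ⟨A, hA, fun f C ε hf hδε => ?_⟩
  have hε := hf.eps_nonneg
  have hN' : (1 : ℝ) ≤ N := by exact_mod_cast hN
  have hInt := hf.integrable_rpow_norm_mul_abs (a := N - ε - δ) (by linarith) (by linarith)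
  refine ⟨hInt, fun x hx => ?_⟩
  refine integrableOn_and_setIntegral_le_const_mul_integral
    (measurableSet_lt measurable_norm measurable_const) ?_ hInt (fun y => by positivity)
    (by positivity) fun y hy => ?_
  · exact (hf.smooth.continuous.abs.measurable.mul (((measurable_rieszKernel i).comp
      (measurable_const.sub measurable_id)).sub (continuous_taylorP i N x).measurable).abs
      ).aestronglyMeasurable
  have hy : ‖y‖ < ‖x‖ / 2 := hy
  rw [norm_mul, norm_abs_eq_norm, norm_abs_eq_norm, Real.norm_eq_abs, Real.norm_eq_abs]
  calc |f y| * |rieszKernel d i (x - y) - taylorP d N i x y|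
      ≤ |f y| * (A * (‖y‖ ^ N / ‖x‖ ^ (d + N))) := by gcongr; exact hremainder x y hy
    _ ≤ |f y| * (A * (‖x‖ ^ (-(d : ℝ) - N + (ε + δ)) * ‖y‖ ^ ((N : ℝ) - (ε + δ)))) := by
        gcongr
        exact pow_div_pow_le_rpow_mul_rpow (norm_nonneg y) (norm_pos_iff.2 hx)
          (by linarith [norm_nonneg x]) (by linarith) (by linarith)
    _ = A * ‖x‖ ^ (-(d : ℝ) - N + ε + δ) * (‖y‖ ^ ((N : ℝ) - ε - δ) * |f y|) := by
        rw [add_assoc, sub_sub]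
        ring

/-- Bound on the region `D₁ = {‖y‖ < ‖x‖/2}`: for `f ∈ L_N(ℝ^d)` and `0 < δ < 1 - ε`,
`∫_{D₁} |f(y)| |R(x-y) - P_N(x,y)| dy ≤ C' ‖x‖^{-d-N+ε+δ} ∫ ‖y‖^{N-ε-δ} |f(y)| dy`,
where `C'` depends only on `d`, `N` and `δ`, and the weighted integral is finite. -/
theorem riesz_region_D1_bound (d N : ℕ) (hd : 1 ≤ d) (hN : 1 ≤ N) (i : Fin d)
    (δ : ℝ) (hδ : 0 < δ) :
    ∃ C' : ℝ, 0 < C' ∧ ∀ (f : Ed d → ℝ) (C ε : ℝ), IsLN d N f C ε → δ < 1 - ε →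
      Integrable (fun y : Ed d => ‖y‖ ^ ((N : ℝ) - ε - δ) * |f y|) ∧
      ∀ x : Ed d, x ≠ 0 →
        IntegrableOn (fun y : Ed d => |f y| * |rieszKernel d i (x - y) - taylorP d N i x y|)
          {y : Ed d | ‖y‖ < ‖x‖ / 2} ∧
        ∫ y in {y : Ed d | ‖y‖ < ‖x‖ / 2},
            |f y| * |rieszKernel d i (x - y) - taylorP d N i x y| ≤
          C' * ‖x‖ ^ (-(d:ℝ) - N + ε + δ) *
            ∫ y : Ed d, ‖y‖ ^ ((N : ℝ) - ε - δ) * |f y| :=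
  riesz_region_D1_bound_general d N hN i δ hδ

end
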